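/- Summing over all comparison-position pairs, the expected spreads of a single subject under the null-hypothesis model cancel exactly: for every n ≥ 2 and every ranking distribution r on the permutations of Fin n, ∑_{1 ≤ i < j ≤ n} ∑_{σ₁,σ₂,σ₃ ∈ S_n} r(σ₁)·r(σ₂)·r(σ₃)·spread_{i,j}(σ₁,σ₂,σ₃) = 0; hence pairs (i, j) for which the expected spread is positive must be balanced by pairs for which it is negative. -/

import Mathlib

/-- Position-based spread: given comparison positions `i`, `j`, the comparison
objects are `a = σ₁⁻¹ i` and `b = σ₁⁻¹ j`; the subject chooses whichever of
`a`, `b` is ranked better (lower) by `σ₂`, and the spread is the amount the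
chosen object's rank improves plus the amount the rejected object's rank
worsens between the stage-one ranking `σ₁` and the stage-three ranking `σ₃`. -/
def posSpread {n : ℕ} (i j : Fin n) (σ₁ σ₂ σ₃ : Equiv.Perm (Fin n)) : ℤ :=
  let a := σ₁⁻¹ i
  let b := σ₁⁻¹ j
  let c := if σ₂ a < σ₂ b then a else b
  let d := if σ₂ a < σ₂ b then b else a
  (((σ₁ c).val : ℤ) - ((σ₃ c).val : ℤ)) + (((σ₃ d).val : ℤ) - ((σ₁ d).val : ℤ))

/-!
Fix the three rankings and sum the spread over all position pairs `i < j`. Re-indexing by the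
objects `σ₁⁻¹ i`, `σ₁⁻¹ j` turns this into a sum over unordered pairs of objects of a pair
spread that no longer refers to positions and changes sign when `σ₁` and `σ₃` are exchanged.
The weight `r σ₁ * r σ₂ * r σ₃` is invariant under that exchange, so the total equals its own
negative.
-/

open Finset

namespace Finset

theorem sum_filter_lt_eq_sum_sym2 {α M : Type*} [Fintype α] [LinearOrder α] [AddCommMonoid M]
    (f : α → α → M) (hf : ∀ a b, f a b = f b a) :
    ∑ p ∈ univ.filter (fun p : α × α => p.1 < p.2), f p.1 p.2
      = ∑ z ∈ univ.sym2 with ¬z.IsDiag, Sym2.lift ⟨f, hf⟩ z := by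
  rw [sum_sym2_filter_not_isDiag]
  refine sum_congr ?_ fun _ _ => rfl
  ext p
  simp only [mem_filter, mem_offDiag, mem_univ, true_and]
  exact ⟨fun h => ⟨h.ne, h⟩, And.right⟩

theorem sum_filter_lt_comp_perm {α M : Type*} [Fintype α] [LinearOrder α] [AddCommMonoid M]
    (f : α → α → M) (hf : ∀ a b, f a b = f b a) (π : Equiv.Perm α) :
    ∑ p ∈ univ.filter (fun p : α × α => p.1 < p.2), f (π p.1) (π p.2)
      = ∑ p ∈ univ.filter (fun p : α × α => p.1 < p.2), f p.1 p.2 := by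
  rw [sum_filter_lt_eq_sum_sym2 _ fun a b => hf (π a) (π b), sum_filter_lt_eq_sum_sym2 f hf]
  refine sum_nbij (Sym2.map π) ?_ (Sym2.map.injective π.injective).injOn ?_ ?_
  · simp [Sym2.isDiag_map π.injective]
  · intro z hz
    refine ⟨Sym2.map π.symm z, ?_, ?_⟩
    · simpa [Sym2.isDiag_map π.symm.injective] using hz
    · simp [Sym2.map_map]
  · intro z _
    induction z using Sym2.ind
    rfl

theorem sum_comm_reverse₃ {ι M : Type*} [Fintype ι] [AddCommMonoid M] (F : ι → ι → ι → M) :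
    ∑ x, ∑ y, ∑ z, F z y x = ∑ x, ∑ y, ∑ z, F x y z := by
  rw [sum_comm_cycle]
  exact sum_congr rfl fun _ _ => sum_comm

end Finset

theorem Fintype.sum_weighted_eq_zero_of_antisymm {ι R : Type*} [Fintype ι] [CommRing R]
    [IsAddTorsionFree R] (w : ι → R) (g : ι → ι → ι → R) (hg : ∀ x y z, g z y x = -g x y z) :
    ∑ x, ∑ y, ∑ z, w x * w y * w z * g x y z = 0 := by
  rw [← self_eq_neg]
  conv_rhs => rw [← sum_comm_reverse₃]
  simp only [← sum_neg_distrib]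
  refine Fintype.sum_congr _ _ fun x => Fintype.sum_congr _ _ fun y =>
    Fintype.sum_congr _ _ fun z => ?_
  rw [hg]
  ring

section Spread

variable {n : ℕ} (σ₁ σ₂ σ₃ : Equiv.Perm (Fin n))

def pairSpread (a b : Fin n) : ℤ :=
  if σ₂ a < σ₂ b then (((σ₁ a).val : ℤ) - (σ₃ a).val) + ((σ₃ b).val - (σ₁ b).val)
  else (((σ₁ b).val : ℤ) - (σ₃ b).val) + ((σ₃ a).val - (σ₁ a).val)

theorem posSpread_eq_pairSpread (i j : Fin n) :
    posSpread i j σ₁ σ₂ σ₃ = pairSpread σ₁ σ₂ σ₃ (σ₁⁻¹ i) (σ₁⁻¹ j) := by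
  dsimp only [posSpread, pairSpread]
  split_ifs <;> rfl

theorem pairSpread_comm (a b : Fin n) : pairSpread σ₁ σ₂ σ₃ a b = pairSpread σ₁ σ₂ σ₃ b a := by
  unfold pairSpread
  rcases lt_trichotomy (σ₂ a) (σ₂ b) with h | h | h
  · simp [h, h.not_gt]
  · simp [σ₂.injective h]
  · simp [h, h.not_gt]

theorem pairSpread_swap (a b : Fin n) :
    pairSpread σ₃ σ₂ σ₁ a b = -pairSpread σ₁ σ₂ σ₃ a b := by
  unfold pairSpread
  split_ifs <;> ring

theorem sum_posSpread_eq_sum_pairSpread :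
    ∑ p ∈ univ.filter (fun p : Fin n × Fin n => p.1 < p.2), posSpread p.1 p.2 σ₁ σ₂ σ₃
      = ∑ p ∈ univ.filter (fun p : Fin n × Fin n => p.1 < p.2), pairSpread σ₁ σ₂ σ₃ p.1 p.2 := by
  simp only [posSpread_eq_pairSpread]
  exact sum_filter_lt_comp_perm _ (pairSpread_comm σ₁ σ₂ σ₃) σ₁⁻¹

theorem sum_posSpread_swap :
    ∑ p ∈ univ.filter (fun p : Fin n × Fin n => p.1 < p.2), posSpread p.1 p.2 σ₃ σ₂ σ₁
      = -∑ p ∈ univ.filter (fun p : Fin n × Fin n => p.1 < p.2), posSpread p.1 p.2 σ₁ σ₂ σ₃ := by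
  rw [sum_posSpread_eq_sum_pairSpread, sum_posSpread_eq_sum_pairSpread, ← sum_neg_distrib]
  exact sum_congr rfl fun p _ => pairSpread_swap σ₁ σ₂ σ₃ p.1 p.2

end Spread

theorem sum_expected_spreads_eq_zero_general (n : ℕ)
    (r : Equiv.Perm (Fin n) → ℝ) :
    ∑ p ∈ Finset.univ.filter (fun p : Fin n × Fin n => p.1 < p.2),
      ∑ σ₁ : Equiv.Perm (Fin n), ∑ σ₂ : Equiv.Perm (Fin n), ∑ σ₃ : Equiv.Perm (Fin n),
        r σ₁ * r σ₂ * r σ₃ * ((posSpread p.1 p.2 σ₁ σ₂ σ₃ : ℤ) : ℝ) = 0 := by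
  rw [← Fintype.sum_weighted_eq_zero_of_antisymm r
    (fun σ₁ σ₂ σ₃ => ((∑ p ∈ univ.filter (fun p : Fin n × Fin n => p.1 < p.2),
      posSpread p.1 p.2 σ₁ σ₂ σ₃ : ℤ) : ℝ))
    (fun σ₁ σ₂ σ₃ => by rw [sum_posSpread_swap, Int.cast_neg])]
  simp only [Int.cast_sum, mul_sum]
  exact sum_comm.trans (sum_congr rfl fun _ _ => sum_comm.trans (sum_congr rfl fun _ _ => sum_comm))

/-- Summing over all comparison-position pairs, the expected spreads of a
single subject under the null-hypothesis model cancel exactly: pairs with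
positive expected spread must be balanced by pairs with negative expected
spread. -/
theorem sum_expected_spreads_eq_zero (n : ℕ) (hn : 2 ≤ n)
    (r : Equiv.Perm (Fin n) → ℝ)
    (hr_nonneg : ∀ σ, 0 ≤ r σ) (hr_sum : ∑ σ : Equiv.Perm (Fin n), r σ = 1) :
    ∑ p ∈ Finset.univ.filter (fun p : Fin n × Fin n => p.1 < p.2),
      ∑ σ₁ : Equiv.Perm (Fin n), ∑ σ₂ : Equiv.Perm (Fin n), ∑ σ₃ : Equiv.Perm (Fin n),
        r σ₁ * r σ₂ * r σ₃ * ((posSpread p.1 p.2 σ₁ σ₂ σ₃ : ℤ) : ℝ) = 0 :=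
  sum_expected_spreads_eq_zero_general n r
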